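/- Let d ≥ 1, m ∈ ℕ, and let V : ℝ^d → ℝ be of class C^m with all partial derivatives of order ≤ m bounded. There exists a constant C ∈ (0,∞), depending only on m, d, and ‖V‖_{C^m}, such that for all u₁, u₂ : ℝ^d → ℂ of class C^m with all partial derivatives of order ≤ m in L², one has ‖Ψ₀(u₂) − Ψ₀(u₁)‖_{H^m} ≤ C (‖u₁‖_{H^m}² + ‖u₂‖_{H^m}²) ‖u₂ − u₁‖_{H^m}, where Ψ₀(u) = (V ⋆ |u|²)·u. -/

import Mathlib

/-!
Differentiation passes under the integral defining `V ⋆ w`, so `∂^β (V ⋆ w) = (∂^β V) ⋆ w` is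
bounded by `‖V‖_{C^m} ‖w‖_{L¹}` for `|β| ≤ m`. Split
`Ψ₀(u₂) - Ψ₀(u₁) = (V ⋆ |u₂|²) (u₂ - u₁) + (V ⋆ (|u₂|² - |u₁|²)) u₁`
and expand `∂^α` of each product by the Leibniz rule into `2^|α|` terms `∂^β (V ⋆ w) · ∂^γ u`,
each a bounded function times an `L²` function. It remains to note `‖|u₂|²‖_{L¹} = ‖u₂‖²` and,
by Cauchy–Schwarz, `‖|u₂|² - |u₁|²‖_{L¹} ≤ (‖u₁‖ + ‖u₂‖) ‖u₂ - u₁‖`.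
-/

open MeasureTheory Filter
open scoped ENNReal NNReal BigOperators Topology

noncomputable section

/-- Partial derivative in coordinate direction `i`. -/
def pd {d : ℕ} {E : Type*} [NormedAddCommGroup E] [NormedSpace ℝ E]
    (i : Fin d) (f : (Fin d → ℝ) → E) : (Fin d → ℝ) → E :=
  fun x => fderiv ℝ f x (Pi.single i 1)

/-- Iterated partial derivative associated with the multi-index `α`. -/
def md {d : ℕ} {E : Type*} [NormedAddCommGroup E] [NormedSpace ℝ E]
    (α : Fin d → ℕ) (f : (Fin d → ℝ) → E) : (Fin d → ℝ) → E :=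
  (List.finRange d).foldr (fun i g => (pd i)^[α i] g) f

/-- L² norm on ℝ^d. -/
def l2norm {d : ℕ} {E : Type*} [NormedAddCommGroup E]
    (f : (Fin d → ℝ) → E) : ℝ :=
  (eLpNorm f 2 (volume : Measure (Fin d → ℝ))).toReal

/-- Sobolev `H^m` norm. -/
def hnorm (d m : ℕ) {E : Type*} [NormedAddCommGroup E] [NormedSpace ℝ E]
    (f : (Fin d → ℝ) → E) : ℝ :=
  Real.sqrt (∑ α : Fin d → Fin (m + 1),
    if (∑ i, (α i : ℕ)) ≤ m then (l2norm (md (fun i => (α i : ℕ)) f)) ^ 2 else 0)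

/-- `C^m` norm: sup over multi-indices of order at most `m` and over points. -/
def cnorm (d m : ℕ) {E : Type*} [NormedAddCommGroup E] [NormedSpace ℝ E]
    (f : (Fin d → ℝ) → E) : ℝ :=
  ⨆ α : Fin d → Fin (m + 1), ⨆ x : Fin d → ℝ,
    if (∑ i, (α i : ℕ)) ≤ m then ‖md (fun i => (α i : ℕ)) f x‖ else 0

/-- `f` is of class `C^m` with all partial derivatives of order at most `m` bounded. -/
def ContDiffBdd (d m : ℕ) {E : Type*} [NormedAddCommGroup E] [NormedSpace ℝ E]
    (f : (Fin d → ℝ) → E) : Prop :=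
  ContDiff ℝ m f ∧ ∀ α : Fin d → ℕ, (∑ i, α i) ≤ m → ∃ B : ℝ, ∀ x, ‖md α f x‖ ≤ B

/-- `f` is of class `C^m` with all partial derivatives of order at most `m` in `L²`. -/
def ContDiffL2 (d m : ℕ) {E : Type*} [NormedAddCommGroup E] [NormedSpace ℝ E]
    (f : (Fin d → ℝ) → E) : Prop :=
  ContDiff ℝ m f ∧ ∀ α : Fin d → ℕ, (∑ i, α i) ≤ m →
    MemLp (md α f) 2 (volume : Measure (Fin d → ℝ))

/-- Fourier transform with kernel `exp(-2πi⟨x,ζ⟩)`. -/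
def ftrans {d : ℕ} (f : (Fin d → ℝ) → ℂ) (ζ : Fin d → ℝ) : ℂ :=
  ∫ x : Fin d → ℝ, Complex.exp (-(2 * Real.pi * Complex.I * (∑ i, x i * ζ i))) * f x

end

section Directions

variable {d : ℕ} {E : Type*} [NormedAddCommGroup E] [NormedSpace ℝ E]

noncomputable def pdList (L : List (Fin d)) (f : (Fin d → ℝ) → E) : (Fin d → ℝ) → E :=
  L.foldr pd f

@[simp] lemma pdList_nil (f : (Fin d → ℝ) → E) : pdList [] f = f := rfl

@[simp] lemma pdList_cons (i : Fin d) (L : List (Fin d)) (f : (Fin d → ℝ) → E) :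
    pdList (i :: L) f = pd i (pdList L f) := rfl

def dirList (α : Fin d → ℕ) : List (Fin d) :=
  (List.finRange d).flatMap fun i => List.replicate (α i) i

lemma pdList_append (L₁ L₂ : List (Fin d)) (f : (Fin d → ℝ) → E) :
    pdList (L₁ ++ L₂) f = pdList L₁ (pdList L₂ f) :=
  List.foldr_append ..

lemma pdList_replicate (k : ℕ) (i : Fin d) (f : (Fin d → ℝ) → E) :
    pdList (List.replicate k i) f = (pd i)^[k] f := by
  induction k with
  | zero => rfl
  | succ k ih => rw [List.replicate_succ, pdList_cons, ih, Function.iterate_succ_apply']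

lemma md_eq_pdList (α : Fin d → ℕ) (f : (Fin d → ℝ) → E) : md α f = pdList (dirList α) f := by
  unfold md dirList
  induction List.finRange d with
  | nil => rfl
  | cons i l ih => rw [List.flatMap_cons, pdList_append, pdList_replicate, ← ih]; rfl

lemma count_dirList (α : Fin d → ℕ) (j : Fin d) : (dirList α).count j = α j := by
  simp [dirList, List.count_flatMap, List.count_replicate, ← Fin.sum_univ_def,
    Finset.sum_ite_eq']

lemma sum_count_eq_length (L : List (Fin d)) : ∑ j, L.count j = L.length := by
  simpa using Multiset.sum_count_eq_card (s := Finset.univ) (m := (L : Multiset (Fin d))) (by simp)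

lemma length_dirList (α : Fin d → ℕ) : (dirList α).length = ∑ i, α i := by
  simp_rw [← sum_count_eq_length, count_dirList]

end Directions

section Smoothness

variable {d : ℕ} {E : Type*} [NormedAddCommGroup E] [NormedSpace ℝ E] {f : (Fin d → ℝ) → E}

lemma contDiff_pd {n : ℕ} (hf : ContDiff ℝ (n + 1 : ℕ) f) (i : Fin d) :
    ContDiff ℝ n (pd i f) :=
  (hf.fderiv_right (by norm_cast)).clm_apply contDiff_const

lemma contDiff_pdList {n k : ℕ} {L : List (Fin d)} (hf : ContDiff ℝ n f)
    (h : k + L.length ≤ n) : ContDiff ℝ k (pdList L f) := by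
  induction L generalizing k with
  | nil => exact hf.of_le (by exact_mod_cast h)
  | cons i L ih => exact contDiff_pd (ih (k := k + 1) (by simp at h; omega)) i

lemma pd_comm (hf : ContDiff ℝ 2 f) (a b : Fin d) : pd a (pd b f) = pd b (pd a f) := by
  ext x
  have hdf : DifferentiableAt ℝ (fderiv ℝ f) x :=
    (hf.fderiv_right (m := 1) (by norm_num)).differentiable (by norm_num) x
  have h2 (v w : Fin d → ℝ) : fderiv ℝ (fun y => fderiv ℝ f y w) x v =
      fderiv ℝ (fderiv ℝ f) x v w := by
    rw [fderiv_clm_apply hdf (differentiableAt_const w)]; simp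
  unfold pd
  rw [h2, h2]
  exact hf.contDiffAt.isSymmSndFDerivAt (by simp) _ _

lemma pdList_perm {n : ℕ} (hf : ContDiff ℝ n f) {L₁ L₂ : List (Fin d)} (h : L₁.Perm L₂)
    (hL : L₁.length ≤ n) : pdList L₁ f = pdList L₂ f := by
  induction h with
  | nil => rfl
  | cons i _ ih => simp only [pdList_cons, ih (by simp at hL; omega)]
  | swap a b L =>
    exact pd_comm (contDiff_pdList (k := 2) hf (by simp at hL; omega)) b a
  | trans h₁₂ _ ih₁ ih₂ => exact (ih₁ hL).trans (ih₂ (h₁₂.length_eq ▸ hL))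

lemma pdList_eq_md_count {n : ℕ} (hf : ContDiff ℝ n f) {L : List (Fin d)} (hL : L.length ≤ n) :
    pdList L f = md (fun j => L.count j) f := by
  rw [md_eq_pdList]
  exact pdList_perm hf (List.perm_iff_count.2 fun j => (count_dirList (L.count ·) j).symm) hL

end Smoothness

section SobolevNorm

variable {d m : ℕ} {E : Type*} [NormedAddCommGroup E]

lemma l2norm_nonneg (f : (Fin d → ℝ) → E) : 0 ≤ l2norm f := ENNReal.toReal_nonneg

variable [NormedSpace ℝ E]

lemma l2norm_md_le_hnorm (f : (Fin d → ℝ) → E) {γ : Fin d → ℕ} (hγ : ∑ i, γ i ≤ m) :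
    l2norm (md γ f) ≤ hnorm d m f := by
  have hγm (i : Fin d) : γ i < m + 1 :=
    (Finset.single_le_sum (fun j _ => Nat.zero_le (γ j)) (Finset.mem_univ i)).trans_lt
      (Nat.lt_succ_of_le hγ)
  have := Finset.single_le_sum (f := fun α : Fin d → Fin (m + 1) =>
      if ∑ i, (α i : ℕ) ≤ m then l2norm (md (fun i => (α i : ℕ)) f) ^ 2 else 0)
    (fun α _ => by positivity) (Finset.mem_univ fun i => ⟨γ i, hγm i⟩)
  exact Real.le_sqrt_of_sq_le (by simpa [hγ] using this)

lemma hnorm_le_of_forall_l2norm_md_le {F : (Fin d → ℝ) → E} {R : ℝ} (hR : 0 ≤ R)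
    (h : ∀ α : Fin d → ℕ, ∑ i, α i ≤ m → l2norm (md α F) ≤ R) :
    hnorm d m F ≤ √(((m + 1) ^ d : ℕ)) * R := by
  calc hnorm d m F ≤ √(∑ _α : Fin d → Fin (m + 1), R ^ 2) := by
        refine Real.sqrt_le_sqrt (Finset.sum_le_sum fun α _ => ?_)
        split_ifs with hα
        · exact pow_le_pow_left₀ (l2norm_nonneg _) (h _ hα) 2
        · positivity
    _ = √(((m + 1) ^ d : ℕ)) * R := by
        rw [Finset.sum_const, Finset.card_univ, nsmul_eq_mul, Real.sqrt_mul (by positivity),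
          Real.sqrt_sq hR]
        simp

lemma hnorm_nonneg (f : (Fin d → ℝ) → E) : 0 ≤ hnorm d m f := Real.sqrt_nonneg _

lemma l2norm_le_hnorm (f : (Fin d → ℝ) → E) : l2norm f ≤ hnorm d m f := by
  have h0 : dirList (0 : Fin d → ℕ) = [] := List.flatMap_eq_nil_iff.2 fun _ _ => rfl
  simpa [md_eq_pdList, h0] using l2norm_md_le_hnorm (m := m) f (γ := 0) (by simp)

lemma l2norm_pdList_le_hnorm {u : (Fin d → ℝ) → E} (hu : ContDiff ℝ m u) {L : List (Fin d)}
    (hL : L.length ≤ m) : l2norm (pdList L u) ≤ hnorm d m u := by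
  rw [pdList_eq_md_count hu hL]
  exact l2norm_md_le_hnorm u (by rwa [sum_count_eq_length])

lemma ContDiffL2.memLp_pdList {u : (Fin d → ℝ) → E} (hu : ContDiffL2 d m u) {L : List (Fin d)}
    (hL : L.length ≤ m) : MemLp (pdList L u) 2 volume := by
  rw [pdList_eq_md_count hu.1 hL]
  exact hu.2 _ (by rwa [sum_count_eq_length])

lemma ContDiffL2.memLp {u : (Fin d → ℝ) → E} (hu : ContDiffL2 d m u) : MemLp u 2 volume :=
  hu.memLp_pdList (L := []) (Nat.zero_le m)

lemma ContDiffBdd.exists_bound_pdList {V : (Fin d → ℝ) → E} (hV : ContDiffBdd d m V) :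
    ∃ M, 0 < M ∧ ∀ L : List (Fin d), L.length ≤ m → ∀ x, ‖pdList L V x‖ ≤ M := by
  have hB (α : Fin d → Fin (m + 1)) :
      ∃ B, ∑ i, (α i : ℕ) ≤ m → ∀ x, ‖md (fun i => (α i : ℕ)) V x‖ ≤ B := by
    by_cases hα : ∑ i, (α i : ℕ) ≤ m
    · obtain ⟨B, hB⟩ := hV.2 _ hα
      exact ⟨B, fun _ => hB⟩
    · exact ⟨0, fun h => absurd h hα⟩
  choose B hB using hB
  obtain ⟨M, hM⟩ := Finite.bddAbove_range B
  refine ⟨max M 1, by positivity, fun L hL x => ?_⟩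
  have hcount (i : Fin d) : L.count i < m + 1 := List.count_le_length.trans_lt (by omega)
  rw [pdList_eq_md_count hV.1 hL]
  exact (hB (fun i => ⟨L.count i, hcount i⟩) (by simpa [sum_count_eq_length]) x).trans
    ((hM ⟨_, rfl⟩).trans (le_max_left _ _))

end SobolevNorm

section Leibniz

variable {d m : ℕ} {E : Type*} [NormedAddCommGroup E] [NormedSpace ℝ E]

/- This is all we know about `V ⋆ w` (it is not shown to be `C^m`), which is why linearity and
the Leibniz rule are proved for arbitrary lists of directions; reordering directions
(`pdList_perm`) is only needed for the `C^m` functions `V` and `u`. -/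
def PartialsDifferentiable (n : ℕ) (f : (Fin d → ℝ) → E) : Prop :=
  ∀ L : List (Fin d), L.length < n → Differentiable ℝ (pdList L f)

lemma PartialsDifferentiable.mono {n k : ℕ} {f : (Fin d → ℝ) → E}
    (hf : PartialsDifferentiable n f) (hkn : k ≤ n) : PartialsDifferentiable k f :=
  fun L hL => hf L (hL.trans_le hkn)

lemma ContDiff.partialsDifferentiable {n : ℕ} {f : (Fin d → ℝ) → E} (hf : ContDiff ℝ n f) :
    PartialsDifferentiable n f := fun L hL =>
  (contDiff_pdList (k := 1) hf (by omega)).differentiable one_ne_zero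

lemma pd_add {f g : (Fin d → ℝ) → E} (hf : Differentiable ℝ f) (hg : Differentiable ℝ g)
    (i : Fin d) : pd i (f + g) = pd i f + pd i g := by
  ext x
  simp [pd, fderiv_add (hf x) (hg x)]

lemma pd_sub {f g : (Fin d → ℝ) → E} (hf : Differentiable ℝ f) (hg : Differentiable ℝ g)
    (i : Fin d) : pd i (f - g) = pd i f - pd i g := by
  ext x
  simp [pd, fderiv_sub (hf x) (hg x)]

lemma pdList_add {f g : (Fin d → ℝ) → E} {L : List (Fin d)}
    (hf : PartialsDifferentiable L.length f) (hg : PartialsDifferentiable L.length g) :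
    pdList L (f + g) = pdList L f + pdList L g := by
  induction L with
  | nil => rfl
  | cons i L ih =>
    rw [pdList_cons, ih (hf.mono (by simp)) (hg.mono (by simp))]
    exact pd_add (hf L (by simp)) (hg L (by simp)) i

lemma pdList_sub {f g : (Fin d → ℝ) → E} {L : List (Fin d)}
    (hf : PartialsDifferentiable L.length f) (hg : PartialsDifferentiable L.length g) :
    pdList L (f - g) = pdList L f - pdList L g := by
  induction L with
  | nil => rfl
  | cons i L ih =>
    rw [pdList_cons, ih (hf.mono (by simp)) (hg.mono (by simp))]
    exact pd_sub (hf L (by simp)) (hg L (by simp)) i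

lemma hasFDerivAt_list_sum {ι : Type*} {T : List ι} {F : ι → (Fin d → ℝ) → E}
    {F' : ι → (Fin d → ℝ) →L[ℝ] E} {x : Fin d → ℝ} (h : ∀ p ∈ T, HasFDerivAt (F p) (F' p) x) :
    HasFDerivAt (fun y => (T.map fun p => F p y).sum) (T.map F').sum x := by
  induction T with
  | nil => exact hasFDerivAt_const 0 x
  | cons a T ih =>
    simp only [List.map_cons, List.sum_cons]
    exact (h a List.mem_cons_self).add (ih fun p hp => h p (List.mem_cons_of_mem a hp))

lemma pd_list_sum {ι : Type*} {T : List ι} {F : ι → (Fin d → ℝ) → E} {x : Fin d → ℝ}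
    (h : ∀ p ∈ T, DifferentiableAt ℝ (F p) x) (i : Fin d) :
    pd i (fun y => (T.map fun p => F p y).sum) x = (T.map fun p => pd i (F p) x).sum := by
  rw [pd, (hasFDerivAt_list_sum fun p hp => (h p hp).hasFDerivAt).fderiv]
  induction T with
  | nil => rfl
  | cons a T ih => simp [ih fun p hp => h p (List.mem_cons_of_mem a hp), pd]

lemma pd_smul_apply {g : (Fin d → ℝ) → ℝ} {u : (Fin d → ℝ) → E} {x : Fin d → ℝ}
    (hg : DifferentiableAt ℝ g x) (hu : DifferentiableAt ℝ u x) (i : Fin d) :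
    pd i (fun y => g y • u y) x = pd i g x • u x + g x • pd i u x := by
  simp [pd, fderiv_fun_smul hg hu, add_comm]

def splits {ι : Type*} : List ι → List (List ι × List ι)
  | [] => [([], [])]
  | i :: L => (splits L).flatMap fun p => [(i :: p.1, p.2), (p.1, i :: p.2)]

lemma length_splits {ι : Type*} (L : List ι) : (splits L).length = 2 ^ L.length := by
  induction L with
  | nil => rfl
  | cons i L ih => simp [splits, List.length_flatMap, ih, pow_succ]

lemma length_add_length_of_mem_splits {ι : Type*} {L : List ι} {p : List ι × List ι}
    (hp : p ∈ splits L) : p.1.length + p.2.length = L.length := by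
  induction L generalizing p with
  | nil => simp_all [splits]
  | cons i L ih =>
    simp only [splits, List.mem_flatMap, List.mem_cons] at hp
    obtain ⟨q, hq, rfl | rfl | h⟩ := hp
    all_goals grind

lemma pdList_smul {g : (Fin d → ℝ) → ℝ} {u : (Fin d → ℝ) → E} {L : List (Fin d)}
    (hg : PartialsDifferentiable L.length g) (hu : PartialsDifferentiable L.length u) :
    pdList L (fun y => g y • u y) =
      fun x => ((splits L).map fun p => pdList p.1 g x • pdList p.2 u x).sum := by
  induction L with
  | nil => ext x; simp [splits]
  | cons i L ih =>
    have hlt {p} (hp : p ∈ splits L) :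
        p.1.length < (i :: L).length ∧ p.2.length < (i :: L).length := by
      have := length_add_length_of_mem_splits hp
      simp only [List.length_cons]
      omega
    ext x
    rw [pdList_cons, ih (hg.mono (by simp)) (hu.mono (by simp)),
      pd_list_sum (F := fun p y => pdList p.1 g y • pdList p.2 u y)
        (fun p hp => ((hg p.1 (hlt hp).1).smul (hu p.2 (hlt hp).2)) x),
      List.map_congr_left fun p hp =>
        pd_smul_apply (hg p.1 (hlt hp).1 x) (hu p.2 (hlt hp).2 x) i]
    simp only [splits]
    generalize splits L = S
    induction S <;> simp_all [add_assoc]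

lemma PartialsDifferentiable.smul {n : ℕ} {g : (Fin d → ℝ) → ℝ} {u : (Fin d → ℝ) → E}
    (hg : PartialsDifferentiable n g) (hu : PartialsDifferentiable n u) :
    PartialsDifferentiable n fun y => g y • u y := fun L hL x => by
  have hdiff : ∀ p ∈ splits L,
      DifferentiableAt ℝ (fun y => pdList p.1 g y • pdList p.2 u y) x := fun p hp => by
    have := length_add_length_of_mem_splits hp
    exact (hg p.1 (by omega)).smul (hu p.2 (by omega)) x
  rw [pdList_smul (hg.mono hL.le) (hu.mono hL.le)]
  exact (hasFDerivAt_list_sum fun p hp => (hdiff p hp).hasFDerivAt).differentiableAt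

lemma ContDiffL2.sub {u₁ u₂ : (Fin d → ℝ) → E} (hu₂ : ContDiffL2 d m u₂)
    (hu₁ : ContDiffL2 d m u₁) : ContDiffL2 d m fun x => u₂ x - u₁ x := by
  refine ⟨hu₂.1.sub hu₁.1, fun α hα => ?_⟩
  have hL : (dirList α).length ≤ m := by rwa [length_dirList]
  rw [md_eq_pdList, show (fun x => u₂ x - u₁ x) = u₂ - u₁ from rfl,
    pdList_sub (hu₂.1.partialsDifferentiable.mono hL) (hu₁.1.partialsDifferentiable.mono hL),
    ← md_eq_pdList, ← md_eq_pdList]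
  exact (hu₂.2 α hα).sub (hu₁.2 α hα)

end Leibniz

section Convolution

variable {d : ℕ}

noncomputable def convolve (Φ w : (Fin d → ℝ) → ℝ) : (Fin d → ℝ) → ℝ :=
  fun x => ∫ y, Φ (x - y) * w y

lemma exists_bound_fderiv {E : Type*} [NormedAddCommGroup E] [NormedSpace ℝ E]
    {f : (Fin d → ℝ) → E} {c : ℝ} (hf : ∀ j z, ‖pd j f z‖ ≤ c) :
    ∃ K, ∀ z, ‖fderiv ℝ f z‖ ≤ K := by
  obtain ⟨C, -, hC⟩ := (Pi.basisFun ℝ (Fin d)).exists_opNorm_le (F := E)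
  exact ⟨C * max c 0, fun z => hC (le_max_right c 0) fun j =>
    (by simpa [pd] using hf j z : _ ≤ c).trans (le_max_left c 0)⟩

variable {Φ w : (Fin d → ℝ) → ℝ} {c : ℝ}

lemma integrable_convolve_integrand (hΦ : Continuous Φ) (hΦc : ∀ z, ‖Φ z‖ ≤ c)
    (hw : Integrable w) (x : Fin d → ℝ) : Integrable fun y => Φ (x - y) * w y :=
  hw.bdd_mul (hΦ.comp (continuous_const.sub continuous_id)).aestronglyMeasurable
    (Eventually.of_forall fun y => hΦc (x - y))

lemma norm_convolve_le (hΦ : Continuous Φ) (hΦc : ∀ z, ‖Φ z‖ ≤ c) (hw : Integrable w)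
    (x : Fin d → ℝ) : ‖convolve Φ w x‖ ≤ c * ∫ y, |w y| := by
  rw [← integral_const_mul]
  refine (norm_integral_le_integral_norm _).trans
    (integral_mono (integrable_convolve_integrand hΦ hΦc hw x).norm
      (hw.abs.const_mul c) fun y => ?_)
  rw [norm_mul, Real.norm_eq_abs (w y)]
  exact mul_le_mul_of_nonneg_right (hΦc _) (abs_nonneg _)

lemma continuous_convolve (hΦ : Continuous Φ) (hΦc : ∀ z, ‖Φ z‖ ≤ c) (hw : Integrable w) :
    Continuous (convolve Φ w) := by
  refine continuous_of_dominated (bound := fun y => c * |w y|)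
    (fun x => (integrable_convolve_integrand hΦ hΦc hw x).aestronglyMeasurable)
    (fun x => Eventually.of_forall fun y => ?_) (hw.abs.const_mul c)
    (Eventually.of_forall fun y => (hΦ.comp (continuous_id.sub continuous_const)).mul
      continuous_const)
  rw [norm_mul, Real.norm_eq_abs (w y)]
  exact mul_le_mul_of_nonneg_right (hΦc _) (abs_nonneg _)

lemma hasFDerivAt_convolve (hΦ : ContDiff ℝ 1 Φ) (hΦc : ∀ z, ‖Φ z‖ ≤ c)
    (hpdΦ : ∀ j z, ‖pd j Φ z‖ ≤ c) (hw : Integrable w) (x : Fin d → ℝ) :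
    Integrable (fun y => w y • fderiv ℝ Φ (x - y)) ∧
      HasFDerivAt (convolve Φ w) (∫ y, w y • fderiv ℝ Φ (x - y)) x := by
  obtain ⟨K, hK⟩ := exists_bound_fderiv hpdΦ
  have hΦ' : Continuous (fderiv ℝ Φ) := hΦ.continuous_fderiv one_ne_zero
  have hmeas (x : Fin d → ℝ) : AEStronglyMeasurable fun y => w y • fderiv ℝ Φ (x - y) :=
    hw.aestronglyMeasurable.smul
      (hΦ'.comp (continuous_const.sub continuous_id)).aestronglyMeasurable
  have hle (x y : Fin d → ℝ) : ‖w y • fderiv ℝ Φ (x - y)‖ ≤ K * |w y| := by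
    rw [norm_smul, Real.norm_eq_abs, mul_comm]
    exact mul_le_mul_of_nonneg_right (hK _) (abs_nonneg _)
  refine ⟨(hw.abs.const_mul K).mono' (hmeas x) (Eventually.of_forall (hle x)),
    hasFDerivAt_integral_of_dominated_of_fderiv_le Filter.univ_mem
      (Eventually.of_forall fun x =>
        (integrable_convolve_integrand hΦ.continuous hΦc hw x).aestronglyMeasurable)
      (integrable_convolve_integrand hΦ.continuous hΦc hw x) (hmeas x)
      (Eventually.of_forall fun y x _ => hle x y) (hw.abs.const_mul K)
      (Eventually.of_forall fun y x _ => ?_)⟩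
  simpa using (((hΦ.differentiable one_ne_zero) (x - y)).hasFDerivAt.comp x
    ((hasFDerivAt_id x).sub_const y)).mul_const (w y)

lemma pd_convolve (hΦ : ContDiff ℝ 1 Φ) (hΦc : ∀ z, ‖Φ z‖ ≤ c)
    (hpdΦ : ∀ j z, ‖pd j Φ z‖ ≤ c) (hw : Integrable w) (i : Fin d) :
    pd i (convolve Φ w) = convolve (pd i Φ) w := by
  ext x
  obtain ⟨hint, hderiv⟩ := hasFDerivAt_convolve hΦ hΦc hpdΦ hw x
  rw [pd, hderiv.fderiv, ContinuousLinearMap.integral_apply hint]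
  simp [convolve, pd, mul_comm]

lemma convolve_sub {Φ w₁ w₂ : (Fin d → ℝ) → ℝ} {c : ℝ} (hΦ : Continuous Φ)
    (hΦc : ∀ z, ‖Φ z‖ ≤ c) (hw₁ : Integrable w₁) (hw₂ : Integrable w₂) :
    convolve Φ (fun y => w₂ y - w₁ y) = convolve Φ w₂ - convolve Φ w₁ := by
  ext x
  simp only [convolve, mul_sub, Pi.sub_apply]
  exact integral_sub (integrable_convolve_integrand hΦ hΦc hw₂ x)
    (integrable_convolve_integrand hΦ hΦc hw₁ x)

end Convolution

section KernelDerivatives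

variable {d m : ℕ} {V w : (Fin d → ℝ) → ℝ} {M : ℝ}

lemma pdList_convolve (hV : ContDiff ℝ m V)
    (hM : ∀ L : List (Fin d), L.length ≤ m → ∀ x, ‖pdList L V x‖ ≤ M) (hw : Integrable w)
    {L : List (Fin d)} (hL : L.length ≤ m) :
    pdList L (convolve V w) = convolve (pdList L V) w := by
  induction L with
  | nil => rfl
  | cons i L ih =>
    simp only [List.length_cons] at hL
    rw [pdList_cons, ih (by omega), pd_convolve (c := M)
      (contDiff_pdList hV (by omega)) (hM L (by omega))
      (fun j => hM (j :: L) (by simp; omega)) hw]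
    rfl

lemma partialsDifferentiable_convolve (hV : ContDiff ℝ m V)
    (hM : ∀ L : List (Fin d), L.length ≤ m → ∀ x, ‖pdList L V x‖ ≤ M) (hw : Integrable w) :
    PartialsDifferentiable m (convolve V w) := fun L hL x => by
  rw [pdList_convolve hV hM hw hL.le]
  exact (hasFDerivAt_convolve (c := M) (contDiff_pdList hV (by omega))
    (hM L hL.le) (fun j => hM (j :: L) (by simpa using hL)) hw x).2.differentiableAt

lemma continuous_pdList_convolve (hV : ContDiff ℝ m V)
    (hM : ∀ L : List (Fin d), L.length ≤ m → ∀ x, ‖pdList L V x‖ ≤ M) (hw : Integrable w)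
    {L : List (Fin d)} (hL : L.length ≤ m) : Continuous (pdList L (convolve V w)) := by
  rw [pdList_convolve hV hM hw hL]
  exact continuous_convolve (contDiff_pdList (k := 0) hV (by omega)).continuous
    (hM L hL) hw

lemma norm_pdList_convolve_le (hV : ContDiff ℝ m V)
    (hM : ∀ L : List (Fin d), L.length ≤ m → ∀ x, ‖pdList L V x‖ ≤ M) (hw : Integrable w)
    {L : List (Fin d)} (hL : L.length ≤ m) (x : Fin d → ℝ) :
    ‖pdList L (convolve V w) x‖ ≤ M * ∫ y, |w y| := by
  rw [pdList_convolve hV hM hw hL]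
  exact norm_convolve_le (contDiff_pdList (k := 0) hV (by omega)).continuous
    (hM L hL) hw x

end KernelDerivatives

section L2

variable {d : ℕ} {E : Type*} [NormedAddCommGroup E]

lemma l2norm_add_le {f g : (Fin d → ℝ) → E} (hf : MemLp f 2 volume) (hg : MemLp g 2 volume) :
    l2norm (f + g) ≤ l2norm f + l2norm g := by
  rw [l2norm, l2norm, l2norm, ← ENNReal.toReal_add hf.eLpNorm_ne_top hg.eLpNorm_ne_top]
  exact ENNReal.toReal_mono (ENNReal.add_ne_top.2 ⟨hf.eLpNorm_ne_top, hg.eLpNorm_ne_top⟩)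
    (eLpNorm_add_le hf.1 hg.1 one_le_two)

lemma memLp_list_sum_and_l2norm_le {ι : Type*} {T : List ι} {F : ι → (Fin d → ℝ) → E} {c : ℝ}
    (h : ∀ p ∈ T, MemLp (F p) 2 volume ∧ l2norm (F p) ≤ c) :
    MemLp (fun x => (T.map fun p => F p x).sum) 2 volume ∧
      l2norm (fun x => (T.map fun p => F p x).sum) ≤ T.length * c := by
  induction T with
  | nil => simp [l2norm]
  | cons a T ih =>
    obtain ⟨ha, hac⟩ := h a List.mem_cons_self
    obtain ⟨hT, hTc⟩ := ih fun p hp => h p (List.mem_cons_of_mem a hp)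
    simp only [List.map_cons, List.sum_cons, List.length_cons, Nat.cast_succ]
    exact ⟨ha.add hT, (l2norm_add_le ha hT).trans (by linarith)⟩

lemma memLp_smul_and_l2norm_le [NormedSpace ℝ E] {g : (Fin d → ℝ) → ℝ} {v : (Fin d → ℝ) → E}
    {c : ℝ} (hg : AEStronglyMeasurable g volume) (hgc : ∀ x, ‖g x‖ ≤ c) (hv : MemLp v 2 volume) :
    MemLp (fun x => g x • v x) 2 volume ∧ l2norm (fun x => g x • v x) ≤ c * l2norm v := by
  have hc : 0 ≤ c := (norm_nonneg _).trans (hgc 0)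
  have hle : ∀ᵐ x ∂volume, ‖g x • v x‖ ≤ c * ‖v x‖ := Eventually.of_forall fun x => by
    rw [norm_smul]
    exact mul_le_mul_of_nonneg_right (hgc x) (norm_nonneg _)
  refine ⟨hv.of_le_mul (hg.smul hv.1) hle, ?_⟩
  calc l2norm (fun x => g x • v x) ≤ (ENNReal.ofReal c * eLpNorm v 2 volume).toReal :=
        ENNReal.toReal_mono (ENNReal.mul_ne_top ENNReal.ofReal_ne_top hv.eLpNorm_ne_top)
          (eLpNorm_le_mul_eLpNorm_of_ae_le_mul hle 2)
    _ = c * l2norm v := by rw [ENNReal.toReal_mul, ENNReal.toReal_ofReal hc, l2norm]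

lemma integral_norm_mul_norm_le {f g : (Fin d → ℝ) → E} (hf : MemLp f 2 volume)
    (hg : MemLp g 2 volume) : ∫ x, ‖f x‖ * ‖g x‖ ≤ l2norm f * l2norm g := by
  have hL2 {f : (Fin d → ℝ) → E} (hf : MemLp f 2 volume) :
      (∫ x, ‖f x‖ ^ (2 : ℝ)) ^ (1 / 2 : ℝ) = l2norm f := by
    rw [l2norm, hf.eLpNorm_eq_integral_rpow_norm two_ne_zero ENNReal.ofNat_ne_top,
      ENNReal.toReal_ofReal (by positivity)]
    norm_num
  rw [← hL2 hf, ← hL2 hg]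
  exact integral_mul_norm_le_Lp_mul_Lq Real.HolderConjugate.two_two (by simpa using hf)
    (by simpa using hg)

lemma integral_abs_norm_sq_le {u : (Fin d → ℝ) → E} (hu : MemLp u 2 volume) :
    ∫ y, |‖u y‖ ^ 2| ≤ l2norm u ^ 2 := by
  simpa [sq] using integral_norm_mul_norm_le hu hu

lemma integral_abs_norm_sq_sub_norm_sq_le {u₁ u₂ : (Fin d → ℝ) → E} (hu₁ : MemLp u₁ 2 volume)
    (hu₂ : MemLp u₂ 2 volume) :
    ∫ y, |‖u₂ y‖ ^ 2 - ‖u₁ y‖ ^ 2| ≤ (l2norm u₂ + l2norm u₁) * l2norm (fun y => u₂ y - u₁ y) := by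
  have hv : MemLp (fun y => u₂ y - u₁ y) 2 volume := hu₂.sub hu₁
  have hint {f : (Fin d → ℝ) → E} (hf : MemLp f 2 volume) :
      Integrable fun y => ‖f y‖ * ‖u₂ y - u₁ y‖ :=
    hf.norm.integrable_mul hv.norm
  calc ∫ y, |‖u₂ y‖ ^ 2 - ‖u₁ y‖ ^ 2|
      ≤ ∫ y, (‖u₂ y‖ * ‖u₂ y - u₁ y‖ + ‖u₁ y‖ * ‖u₂ y - u₁ y‖) :=
        integral_mono_of_nonneg (Eventually.of_forall fun y => abs_nonneg _)
          ((hint hu₂).add (hint hu₁)) (Eventually.of_forall fun y => by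
            have := abs_le.1 (abs_norm_sub_norm_le (u₂ y) (u₁ y))
            have := norm_nonneg (u₁ y)
            have := norm_nonneg (u₂ y)
            exact abs_le.2 ⟨by nlinarith, by nlinarith⟩)
    _ = (∫ y, ‖u₂ y‖ * ‖u₂ y - u₁ y‖) + ∫ y, ‖u₁ y‖ * ‖u₂ y - u₁ y‖ :=
        integral_add (hint hu₂) (hint hu₁)
    _ ≤ l2norm u₂ * l2norm (fun y => u₂ y - u₁ y) + l2norm u₁ * l2norm (fun y => u₂ y - u₁ y) :=
        add_le_add (integral_norm_mul_norm_le hu₂ hv) (integral_norm_mul_norm_le hu₁ hv)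
    _ = _ := by ring

end L2

section Estimates

variable {d m : ℕ} {E : Type*} [NormedAddCommGroup E] [NormedSpace ℝ E] {M : ℝ}

lemma memLp_pdList_convolve_smul_and_l2norm_le {V w : (Fin d → ℝ) → ℝ} (hV : ContDiff ℝ m V)
    (hM : ∀ L : List (Fin d), L.length ≤ m → ∀ x, ‖pdList L V x‖ ≤ M) (hw : Integrable w)
    {u : (Fin d → ℝ) → E} (hu : ContDiffL2 d m u) {L : List (Fin d)} (hL : L.length ≤ m) :
    MemLp (pdList L fun x => convolve V w x • u x) 2 volume ∧
      l2norm (pdList L fun x => convolve V w x • u x) ≤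
        2 ^ L.length * (M * ∫ y, |w y|) * hnorm d m u := by
  have hM0 : 0 ≤ M := (norm_nonneg _).trans (hM [] (Nat.zero_le m) 0)
  have hterm : ∀ p ∈ splits L,
      MemLp (fun x => pdList p.1 (convolve V w) x • pdList p.2 u x) 2 volume ∧
        l2norm (fun x => pdList p.1 (convolve V w) x • pdList p.2 u x) ≤
          M * (∫ y, |w y|) * hnorm d m u := by
    intro p hp
    have hlen := length_add_length_of_mem_splits hp
    obtain ⟨hmem, hle⟩ := memLp_smul_and_l2norm_le
      (continuous_pdList_convolve hV hM hw (L := p.1) (by omega)).aestronglyMeasurable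
      (norm_pdList_convolve_le hV hM hw (L := p.1) (by omega))
      (hu.memLp_pdList (L := p.2) (by omega))
    exact ⟨hmem, hle.trans (mul_le_mul_of_nonneg_left
      (l2norm_pdList_le_hnorm hu.1 (by omega)) (by positivity))⟩
  rw [pdList_smul ((partialsDifferentiable_convolve hV hM hw).mono hL)
    (hu.1.partialsDifferentiable.mono hL)]
  simpa [length_splits, mul_assoc] using memLp_list_sum_and_l2norm_le hterm

lemma l2norm_md_convolve_smul_sub_le {V w₁ w₂ : (Fin d → ℝ) → ℝ} (hV : ContDiff ℝ m V)
    (hM : ∀ L : List (Fin d), L.length ≤ m → ∀ x, ‖pdList L V x‖ ≤ M)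
    (hw₁ : Integrable w₁) (hw₂ : Integrable w₂) {u₁ u₂ : (Fin d → ℝ) → E}
    (hu₁ : ContDiffL2 d m u₁) (hu₂ : ContDiffL2 d m u₂) {α : Fin d → ℕ} (hα : ∑ i, α i ≤ m) :
    l2norm (md α fun x => convolve V w₂ x • u₂ x - convolve V w₁ x • u₁ x) ≤
      2 ^ m * M * ((∫ y, |w₂ y|) * hnorm d m (fun x => u₂ x - u₁ x) +
        (∫ y, |w₂ y - w₁ y|) * hnorm d m u₁) := by
  have hL : (dirList α).length ≤ m := by rwa [length_dirList]
  have hM0 : 0 ≤ M := (norm_nonneg _).trans (hM [] (Nat.zero_le m) 0)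
  have hsplit : (fun x => convolve V w₂ x • u₂ x - convolve V w₁ x • u₁ x) =
      (fun x => convolve V w₂ x • (u₂ x - u₁ x)) +
        fun x => convolve V (fun y => w₂ y - w₁ y) x • u₁ x := by
    rw [convolve_sub hV.continuous (hM [] (Nat.zero_le m)) hw₁ hw₂]
    ext x
    simp [smul_sub, sub_smul]
  have hPD₁ := (partialsDifferentiable_convolve hV hM hw₂).smul
    (hu₂.sub hu₁).1.partialsDifferentiable
  have hw : Integrable fun y => w₂ y - w₁ y := hw₂.sub hw₁
  have hPD₂ := (partialsDifferentiable_convolve hV hM hw).smul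
    hu₁.1.partialsDifferentiable
  obtain ⟨h₁, h₁'⟩ := memLp_pdList_convolve_smul_and_l2norm_le hV hM hw₂ (hu₂.sub hu₁) hL
  obtain ⟨h₂, h₂'⟩ := memLp_pdList_convolve_smul_and_l2norm_le hV hM hw hu₁ hL
  have h2m : (2 : ℝ) ^ (dirList α).length ≤ 2 ^ m := pow_le_pow_right₀ one_le_two hL
  have hI₁ : 0 ≤ ∫ y, |w₂ y| := integral_nonneg fun y => abs_nonneg _
  have hI₂ : 0 ≤ ∫ y, |w₂ y - w₁ y| := integral_nonneg fun y => abs_nonneg _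
  have hδ := hnorm_nonneg (m := m) fun x => u₂ x - u₁ x
  have ha := hnorm_nonneg (m := m) u₁
  rw [md_eq_pdList, hsplit, pdList_add (hPD₁.mono hL) (hPD₂.mono hL)]
  calc _ ≤ _ := l2norm_add_le h₁ h₂
    _ ≤ _ := add_le_add h₁' h₂'
    _ = 2 ^ (dirList α).length * M * ((∫ y, |w₂ y|) * hnorm d m (fun x => u₂ x - u₁ x) +
        (∫ y, |w₂ y - w₁ y|) * hnorm d m u₁) := by ring
    _ ≤ _ := by gcongr

lemma integral_abs_norm_sq_mul_hnorm_add_le {u₁ u₂ : (Fin d → ℝ) → E} (hu₁ : ContDiffL2 d m u₁)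
    (hu₂ : ContDiffL2 d m u₂) :
    (∫ y, |‖u₂ y‖ ^ 2|) * hnorm d m (fun x => u₂ x - u₁ x) +
        (∫ y, |‖u₂ y‖ ^ 2 - ‖u₁ y‖ ^ 2|) * hnorm d m u₁ ≤
      2 * ((hnorm d m u₁ ^ 2 + hnorm d m u₂ ^ 2) * hnorm d m (fun x => u₂ x - u₁ x)) := by
  set a := hnorm d m u₁
  set b := hnorm d m u₂
  set δ := hnorm d m fun x => u₂ x - u₁ x
  have ha : 0 ≤ a := hnorm_nonneg u₁
  have hb : 0 ≤ b := hnorm_nonneg u₂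
  have hδ : 0 ≤ δ := hnorm_nonneg _
  have hw₂ : ∫ y, |‖u₂ y‖ ^ 2| ≤ b ^ 2 := (integral_abs_norm_sq_le hu₂.memLp).trans
    (pow_le_pow_left₀ (l2norm_nonneg _) (l2norm_le_hnorm u₂) 2)
  have hw : ∫ y, |‖u₂ y‖ ^ 2 - ‖u₁ y‖ ^ 2| ≤ (b + a) * δ :=
    (integral_abs_norm_sq_sub_norm_sq_le hu₁.memLp hu₂.memLp).trans
      (mul_le_mul (add_le_add (l2norm_le_hnorm u₂) (l2norm_le_hnorm u₁)) (l2norm_le_hnorm _)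
        (l2norm_nonneg _) (by positivity))
  nlinarith [mul_le_mul_of_nonneg_right hw₂ hδ, mul_le_mul_of_nonneg_right hw ha,
    mul_nonneg hδ (sq_nonneg (a - b)), mul_nonneg hδ (sq_nonneg (a + b))]

end Estimates

theorem statement4_general (d m : ℕ) (V : (Fin d → ℝ) → ℝ)
    (hV : ContDiffBdd d m V) :
    ∃ C : ℝ, 0 < C ∧ ∀ u₁ u₂ : (Fin d → ℝ) → ℂ,
      ContDiffL2 d m u₁ → ContDiffL2 d m u₂ →
      hnorm d m (fun x => ((∫ y, V (x - y) * ‖u₂ y‖ ^ 2 : ℝ) : ℂ) * u₂ x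
          - ((∫ y, V (x - y) * ‖u₁ y‖ ^ 2 : ℝ) : ℂ) * u₁ x)
        ≤ C * (hnorm d m u₁ ^ 2 + hnorm d m u₂ ^ 2) * hnorm d m (fun x => u₂ x - u₁ x) := by
  obtain ⟨M, hM0, hM⟩ := hV.exists_bound_pdList
  -- `(m + 1) ^ d` bounds the number of multi-indices in `hnorm`, `2 ^ m` the Leibniz terms.
  refine ⟨√(((m + 1) ^ d : ℕ)) * (2 ^ (m + 1) * M), by positivity, fun u₁ u₂ hu₁ hu₂ => ?_⟩
  have ha := hnorm_nonneg (m := m) u₁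
  have hb := hnorm_nonneg (m := m) u₂
  have hδ := hnorm_nonneg (m := m) fun x => u₂ x - u₁ x
  have key (α : Fin d → ℕ) (hα : ∑ i, α i ≤ m) := (l2norm_md_convolve_smul_sub_le hV.1 hM
    hu₁.memLp.norm.integrable_sq hu₂.memLp.norm.integrable_sq hu₁ hu₂ hα).trans
    (mul_le_mul_of_nonneg_left (integral_abs_norm_sq_mul_hnorm_add_le hu₁ hu₂) (by positivity))
  calc _ ≤ √(((m + 1) ^ d : ℕ)) * (2 ^ m * M * (2 * ((hnorm d m u₁ ^ 2 + hnorm d m u₂ ^ 2) *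
          hnorm d m (fun x => u₂ x - u₁ x)))) :=
        hnorm_le_of_forall_l2norm_md_le (by positivity) key
    _ = _ := by ring

theorem statement4 (d m : ℕ) (hd : 1 ≤ d) (V : (Fin d → ℝ) → ℝ)
    (hV : ContDiffBdd d m V) :
    ∃ C : ℝ, 0 < C ∧ ∀ u₁ u₂ : (Fin d → ℝ) → ℂ,
      ContDiffL2 d m u₁ → ContDiffL2 d m u₂ →
      hnorm d m (fun x => ((∫ y, V (x - y) * ‖u₂ y‖ ^ 2 : ℝ) : ℂ) * u₂ x
          - ((∫ y, V (x - y) * ‖u₁ y‖ ^ 2 : ℝ) : ℂ) * u₁ x)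
        ≤ C * (hnorm d m u₁ ^ 2 + hnorm d m u₂ ^ 2) * hnorm d m (fun x => u₂ x - u₁ x) :=
  statement4_general d m V hV
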